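/- Assume there exists C ∈ ℝ₊ such that f_{iδ}(u)/f_i(u) ≤ C for all u in the definition domain of X_i, and that the perturbed output distribution F_{iδ} satisfies: its α-quantile q_{iδ}^α is the unique t with F_{iδ}(s) < α for s < t and F_{iδ}(s) > α for s > t. Then the self-normalized importance sampling quantile estimator q̃_{iδ}^{αN} = inf{t ∈ ℝ : F̃_{iδ}^N(t) ≥ α} converges almost surely to q_{iδ}^α as N → ∞. -/

import Mathlib

/-!
With `L = f_{iδ} / f_i` the likelihood ratio, absolute continuity gives
`L · ∏ f_j = f_{iδ} · ∏_{j ≠ i} f_j` almost everywhere, so `E_f[L] = 1` (in particular `L` is integrable) and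
`E_f[L · 1{G ≤ t}] = F_{iδ}(t)`. The strong law of large numbers, applied to numerator and
denominator, makes `F̃^N(r) → F_{iδ}(r)` almost surely, simultaneously for all rational `r`.
Each `F̃^N` is nondecreasing and `F_{iδ}` crosses `α` strictly at `q`, so for rationals
`r₀ < q < r₁` eventually `F̃^N(r₀) < α < F̃^N(r₁)`, which traps `inf {t | α ≤ F̃^N(t)}`
in `[r₀, r₁]`.
-/

open MeasureTheory Filter
open scoped Topology

lemma tendsto_sInf_setOf_le_of_tendsto_rat {F : ℝ → ℝ} {α q : ℝ}
    (hbelow : ∀ s, s < q → F s < α) (habove : ∀ s, q < s → α < F s)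
    {g : ℕ → ℝ → ℝ} (hmono : ∀ N, Monotone (g N))
    (hg : ∀ r : ℚ, Tendsto (fun N => g N r) atTop (𝓝 (F r))) :
    Tendsto (fun N => sInf {t : ℝ | α ≤ g N t}) atTop (𝓝 q) := by
  rw [Metric.tendsto_atTop]
  intro ε hε
  obtain ⟨r₀, hr₀, hr₀q⟩ := exists_rat_btwn (show q - ε < q by linarith)
  obtain ⟨r₁, hqr₁, hr₁⟩ := exists_rat_btwn (show q < q + ε by linarith)
  obtain ⟨N₀, hN₀⟩ := eventually_atTop.1 <|
    ((hg r₀).eventually_lt_const (hbelow _ hr₀q)).and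
      ((hg r₁).eventually_const_lt (habove _ hqr₁))
  refine ⟨N₀, fun N hN => ?_⟩
  obtain ⟨hlt, hgt⟩ := hN₀ N hN
  have hmem : (r₁ : ℝ) ∈ {t : ℝ | α ≤ g N t} := hgt.le
  have hlb : (r₀ : ℝ) ∈ lowerBounds {t : ℝ | α ≤ g N t} := fun t ht =>
    le_of_not_gt fun htr => (ht.trans (hmono N htr.le)).not_gt hlt
  have hup : sInf {t : ℝ | α ≤ g N t} ≤ r₁ := csInf_le ⟨r₀, hlb⟩ hmem
  have hlo : (r₀ : ℝ) ≤ sInf {t : ℝ | α ≤ g N t} := le_csInf ⟨r₁, hmem⟩ hlb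
  rw [Real.dist_eq, abs_lt]
  constructor <;> linarith

lemma monotone_sum_mul_ite_le_div_sum {ι : Type*} (s : Finset ι) {w Y : ι → ℝ}
    (hw : ∀ n, 0 ≤ w n) :
    Monotone fun t => (∑ n ∈ s, w n * if Y n ≤ t then (1 : ℝ) else 0) / ∑ n ∈ s, w n := by
  intro t t' htt'
  refine div_le_div_of_nonneg_right (Finset.sum_le_sum fun n _ => ?_)
    (Finset.sum_nonneg fun n _ => hw n)
  refine mul_le_mul_of_nonneg_left ?_ (hw n)
  split_ifs with h h'
  exacts [le_rfl, absurd (h.trans htt') h', zero_le_one, le_rfl]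

lemma tendsto_sum_div_sum_of_tendsto_average {a b : ℕ → ℝ} {A B : ℝ}
    (ha : Tendsto (fun N : ℕ => (∑ n ∈ Finset.range N, a n) / N) atTop (𝓝 A))
    (hb : Tendsto (fun N : ℕ => (∑ n ∈ Finset.range N, b n) / N) atTop (𝓝 B)) (hB : B ≠ 0) :
    Tendsto (fun N => (∑ n ∈ Finset.range N, a n) / ∑ n ∈ Finset.range N, b n) atTop
      (𝓝 (A / B)) := by
  refine (ha.div hb hB).congr' ?_
  filter_upwards [eventually_ne_atTop 0] with N hN
  exact div_div_div_cancel_right₀ (Nat.cast_ne_zero.2 hN) _ _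

lemma ae_tendsto_average_comp {Ω β : Type*} [MeasurableSpace Ω] [MeasurableSpace β]
    {ℙ : Measure Ω} {μ : Measure β} {X : ℕ → Ω → β} (hX_meas : ∀ n, Measurable (X n))
    (hX_law : ∀ n, Measure.map (X n) ℙ = μ)
    (hX_indep : Pairwise fun m n => ProbabilityTheory.IndepFun (X m) (X n) ℙ)
    {h : β → ℝ} (hh : Measurable h) (hint : Integrable h μ) :
    ∀ᵐ ω ∂ℙ, Tendsto (fun N : ℕ => (∑ n ∈ Finset.range N, h (X n ω)) / N)
      atTop (𝓝 (∫ x, h x ∂μ)) := by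
  have hint₀ : Integrable (h ∘ X 0) ℙ := by
    rw [← integrable_map_measure (hX_law 0 ▸ hh.aestronglyMeasurable) (hX_meas 0).aemeasurable,
      hX_law 0]
    exact hint
  have hident : ∀ n, ProbabilityTheory.IdentDistrib (h ∘ X n) (h ∘ X 0) ℙ ℙ := fun n =>
    (ProbabilityTheory.IdentDistrib.mk (hX_meas n).aemeasurable (hX_meas 0).aemeasurable
      (by rw [hX_law n, hX_law 0])).comp hh
  have hmean : ∫ ω, h (X 0 ω) ∂ℙ = ∫ x, h x ∂μ := by
    rw [← hX_law 0, integral_map (hX_meas 0).aemeasurable hh.aestronglyMeasurable]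
  simpa only [Function.comp_apply, hmean] using
    ProbabilityTheory.strong_law_ae_real (fun n => h ∘ X n) hint₀
      (fun m n hmn => (hX_indep hmn).comp hh hh) hident

lemma ae_tendsto_sum_mul_ite_le_div_sum {Ω β : Type*} [MeasurableSpace Ω] [MeasurableSpace β]
    {ℙ : Measure Ω} {μ : Measure β} {X : ℕ → Ω → β} (hX_meas : ∀ n, Measurable (X n))
    (hX_law : ∀ n, Measure.map (X n) ℙ = μ)
    (hX_indep : Pairwise fun m n => ProbabilityTheory.IndepFun (X m) (X n) ℙ)
    {L G : β → ℝ} (hL_meas : Measurable L) (hL_mean : ∫ x, L x ∂μ ≠ 0) (hG : Measurable G)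
    (t : ℝ) :
    ∀ᵐ ω ∂ℙ, Tendsto (fun N =>
        (∑ n ∈ Finset.range N, L (X n ω) * if G (X n ω) ≤ t then (1 : ℝ) else 0)
          / ∑ n ∈ Finset.range N, L (X n ω))
      atTop (𝓝 ((∫ x, L x * (if G x ≤ t then (1 : ℝ) else 0) ∂μ) / ∫ x, L x ∂μ)) := by
  have hL_int : Integrable L μ := .of_integral_ne_zero hL_mean
  have hmeas : Measurable fun x => L x * if G x ≤ t then (1 : ℝ) else 0 :=
    hL_meas.mul (Measurable.ite (measurableSet_le hG measurable_const) measurable_const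
      measurable_const)
  have hint : Integrable (fun x => L x * if G x ≤ t then (1 : ℝ) else 0) μ :=
    hL_int.mono hmeas.aestronglyMeasurable (ae_of_all _ fun x => by split_ifs <;> simp)
  filter_upwards [ae_tendsto_average_comp hX_meas hX_law hX_indep hmeas hint,
    ae_tendsto_average_comp hX_meas hX_law hX_indep hL_meas hL_int] with ω hnum hden
  exact tendsto_sum_div_sum_of_tendsto_average hnum hden hL_mean

lemma integral_withDensity_ofReal {β : Type*} [MeasurableSpace β] {μ : Measure β}
    {p : β → ℝ} (hp : Measurable p) (hp0 : ∀ᵐ x ∂μ, 0 ≤ p x) (g : β → ℝ) :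
    ∫ x, g x ∂μ.withDensity (fun x => ENNReal.ofReal (p x)) = ∫ x, p x * g x ∂μ := by
  rw [integral_withDensity_eq_integral_toReal_smul hp.ennreal_ofReal
    (ae_of_all _ fun _ => ENNReal.ofReal_lt_top)]
  refine integral_congr_ae ?_
  filter_upwards [hp0] with x hx
  rw [ENNReal.toReal_ofReal hx, smul_eq_mul]

lemma isProbabilityMeasure_withDensity_ofReal {β : Type*} [MeasurableSpace β] {μ : Measure β}
    {p : β → ℝ} (hp0 : ∀ᵐ x ∂μ, 0 ≤ p x) (hp : ∫ x, p x ∂μ = 1) :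
    IsProbabilityMeasure (μ.withDensity fun x => ENNReal.ofReal (p x)) := by
  constructor
  rw [withDensity_apply _ MeasurableSet.univ, Measure.restrict_univ,
    ← ofReal_integral_eq_lintegral_ofReal (.of_integral_ne_zero (hp ▸ one_ne_zero)) hp0, hp,
    ENNReal.ofReal_one]

lemma integral_mul_withDensity_ofReal_of_ae_mul_eq {β : Type*} [MeasurableSpace β]
    {μ : Measure β} {p q L : β → ℝ} (hp : Measurable p) (hp0 : ∀ᵐ x ∂μ, 0 ≤ p x)
    (hq : Measurable q) (hq0 : ∀ᵐ x ∂μ, 0 ≤ q x) (hLpq : ∀ᵐ x ∂μ, L x * p x = q x)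
    (g : β → ℝ) :
    ∫ x, L x * g x ∂μ.withDensity (fun x => ENNReal.ofReal (p x))
      = ∫ x, g x ∂μ.withDensity (fun x => ENNReal.ofReal (q x)) := by
  rw [integral_withDensity_ofReal hp hp0, integral_withDensity_ofReal hq hq0]
  refine integral_congr_ae ?_
  filter_upwards [hLpq] with x hx
  rw [← hx]
  ring

section ProductDensity

variable {d : ℕ} {i : Fin d} {f : Fin d → ℝ → ℝ} {fδ : ℝ → ℝ}

lemma ae_div_mul_prod_eq_mul_prod_erase (hfδ_nonneg : ∀ u, 0 ≤ fδ u)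
    (habs : ∀ᵐ u : ℝ, 0 < fδ u → 0 < f i u) :
    ∀ᵐ x : Fin d → ℝ, fδ (x i) / f i (x i) * ∏ j, f j (x j)
      = fδ (x i) * ∏ j ∈ Finset.univ.erase i, f j (x j) := by
  have hcancel : ∀ᵐ u : ℝ, fδ u / f i u * f i u = fδ u := by
    filter_upwards [habs] with u hu
    refine div_mul_cancel_of_imp fun h0 => ?_
    exact le_antisymm (not_lt.1 fun hpos => (hu hpos).ne' h0) (hfδ_nonneg u)
  filter_upwards [Measure.tendsto_eval_ae_ae.eventually hcancel] with x hx
  rw [← Finset.mul_prod_erase _ _ (Finset.mem_univ i), ← mul_assoc]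
  exact congrArg (· * _) hx

lemma integral_div_mul_withDensity_prod (hf_meas : ∀ j, Measurable (f j))
    (hfδ_meas : Measurable fδ) (hf_nonneg : ∀ j u, 0 ≤ f j u) (hfδ_nonneg : ∀ u, 0 ≤ fδ u)
    (habs : ∀ᵐ u : ℝ, 0 < fδ u → 0 < f i u) (g : (Fin d → ℝ) → ℝ) :
    ∫ x, fδ (x i) / f i (x i) * g x
        ∂volume.withDensity (fun x => ENNReal.ofReal (∏ j, f j (x j)))
      = ∫ x, g x ∂volume.withDensity
          (fun x => ENNReal.ofReal (fδ (x i) * ∏ j ∈ Finset.univ.erase i, f j (x j))) :=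
  integral_mul_withDensity_ofReal_of_ae_mul_eq (by fun_prop)
    (ae_of_all _ fun x => Finset.prod_nonneg fun j _ => hf_nonneg j _) (by fun_prop)
    (ae_of_all _ fun x => mul_nonneg (hfδ_nonneg _) (Finset.prod_nonneg fun j _ => hf_nonneg j _))
    (ae_div_mul_prod_eq_mul_prod_erase hfδ_nonneg habs) g

lemma integral_mul_prod_erase_eq_one (hf_int : ∀ j, ∫ u, f j u = 1) (hfδ_int : ∫ u, fδ u = 1) :
    ∫ x : Fin d → ℝ, fδ (x i) * ∏ j ∈ Finset.univ.erase i, f j (x j) = 1 := by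
  have hupdate : ∀ x : Fin d → ℝ, fδ (x i) * ∏ j ∈ Finset.univ.erase i, f j (x j)
      = ∏ j, Function.update f i fδ j (x j) := by
    intro x
    rw [← Finset.mul_prod_erase _ _ (Finset.mem_univ i), Function.update_self]
    congr 1
    exact Finset.prod_congr rfl fun j hj =>
      by rw [Function.update_of_ne (Finset.ne_of_mem_erase hj)]
  simp_rw [hupdate, integral_fintype_prod_volume_eq_prod]
  refine Finset.prod_eq_one fun j _ => ?_
  rcases eq_or_ne j i with rfl | hji
  · rw [Function.update_self, hfδ_int]
  · rw [Function.update_of_ne hji, hf_int j]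

lemma isProbabilityMeasure_withDensity_mul_prod_erase (hf_nonneg : ∀ j u, 0 ≤ f j u)
    (hfδ_nonneg : ∀ u, 0 ≤ fδ u) (hf_int : ∀ j, ∫ u, f j u = 1) (hfδ_int : ∫ u, fδ u = 1) :
    IsProbabilityMeasure (volume.withDensity
      (fun x : Fin d → ℝ => ENNReal.ofReal (fδ (x i) * ∏ j ∈ Finset.univ.erase i, f j (x j)))) :=
  isProbabilityMeasure_withDensity_ofReal
    (ae_of_all _ fun _ => mul_nonneg (hfδ_nonneg _) (Finset.prod_nonneg fun j _ => hf_nonneg j _))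
    (integral_mul_prod_erase_eq_one hf_int hfδ_int)

end ProductDensity

theorem self_normalized_IS_quantile_strongly_consistent_general
    (d : ℕ) (i : Fin d) (f : Fin d → ℝ → ℝ) (fδ : ℝ → ℝ)
    (hf_meas : ∀ j, Measurable (f j)) (hfδ_meas : Measurable fδ)
    (hf_nonneg : ∀ j x, 0 ≤ f j x) (hfδ_nonneg : ∀ x, 0 ≤ fδ x)
    (hf_int : ∀ j, ∫ x, f j x = 1) (hfδ_int : ∫ x, fδ x = 1)
    (habs : ∀ᵐ x : ℝ, fδ x > 0 → f i x > 0)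
    (μ : Measure (Fin d → ℝ))
    (hμ : μ = volume.withDensity (fun x => ENNReal.ofReal (∏ j, f j (x j))))
    (G : (Fin d → ℝ) → ℝ) (hG : Measurable G)
    (α : ℝ)
    (Fδ : ℝ → ℝ)
    (hFδ : ∀ t, Fδ t = ((volume.withDensity
        (fun x => ENNReal.ofReal (fδ (x i) * ∏ j ∈ Finset.univ.erase i, f j (x j))))
        {x | G x ≤ t}).toReal)
    (qδα : ℝ)
    -- `q_{iδ}^α` is the unique solution of the crossing inequalities
    (hbelow : ∀ s, s < qδα → Fδ s < α) (habove : ∀ s, qδα < s → α < Fδ s)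
    -- the i.i.d. sample
    (Ω : Type*) [MeasurableSpace Ω] (ℙ : Measure Ω)
    (X : ℕ → Ω → (Fin d → ℝ)) (hX_meas : ∀ n, Measurable (X n))
    (hX_law : ∀ n, Measure.map (X n) ℙ = μ)
    (hX_indep : ProbabilityTheory.iIndepFun X ℙ) :
    ∀ᵐ ω ∂ℙ, Tendsto (fun N : ℕ =>
        sInf {t : ℝ | α ≤
          (∑ n ∈ Finset.range N,
            (fδ (X n ω i) / f i (X n ω i)) * (if G (X n ω) ≤ t then (1 : ℝ) else 0)) /
          (∑ n ∈ Finset.range N, fδ (X n ω i) / f i (X n ω i))})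
      atTop (nhds qδα) := by
  set L : (Fin d → ℝ) → ℝ := fun x => fδ (x i) / f i (x i)
  have := isProbabilityMeasure_withDensity_mul_prod_erase (i := i) hf_nonneg hfδ_nonneg hf_int
    hfδ_int
  have hchange := hμ ▸ integral_div_mul_withDensity_prod hf_meas hfδ_meas hf_nonneg hfδ_nonneg habs
  have hL_mean : ∫ x, L x ∂μ = 1 := by simpa using hchange fun _ => 1
  have hcdf : ∀ t, ∫ x, L x * (if G x ≤ t then (1 : ℝ) else 0) ∂μ = Fδ t := fun t => by
    rw [hchange, hFδ, ← measureReal_def,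
      ← integral_indicator_one (measurableSet_le hG measurable_const)]
    rfl
  have hL_meas : Measurable L := by fun_prop
  filter_upwards [ae_all_iff.2 fun r : ℚ => ae_tendsto_sum_mul_ite_le_div_sum hX_meas hX_law
    (fun m n hmn => hX_indep.indepFun hmn) hL_meas (hL_mean ▸ one_ne_zero) hG r] with ω hω
  refine tendsto_sInf_setOf_le_of_tendsto_rat hbelow habove
    (fun N => monotone_sum_mul_ite_le_div_sum _ fun n => div_nonneg (hfδ_nonneg _) (hf_nonneg i _))
    fun r => ?_
  simpa only [hcdf, hL_mean, div_one] using hω r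

/-- Strong consistency of the self-normalized importance sampling quantile
estimator: if the likelihood ratio is bounded by `C` on the domain of `X_i`
and `q_{iδ}^α` is the unique crossing point of level `α` for the perturbed
output distribution function `F_{iδ}`, then
`q̃_{iδ}^{αN} = inf{t : F̃_{iδ}^N(t) ≥ α} → q_{iδ}^α` almost surely. -/
theorem self_normalized_IS_quantile_strongly_consistent
    (d : ℕ) (i : Fin d) (f : Fin d → ℝ → ℝ) (fδ : ℝ → ℝ)
    (hf_meas : ∀ j, Measurable (f j)) (hfδ_meas : Measurable fδ)
    (hf_nonneg : ∀ j x, 0 ≤ f j x) (hfδ_nonneg : ∀ x, 0 ≤ fδ x)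
    (hf_int : ∀ j, ∫ x, f j x = 1) (hfδ_int : ∫ x, fδ x = 1)
    (habs : ∀ᵐ x : ℝ, fδ x > 0 → f i x > 0)
    (C : ℝ) (hC : 0 ≤ C)
    (hbound : ∀ u : ℝ, 0 < f i u → fδ u / f i u ≤ C)
    (μ : Measure (Fin d → ℝ))
    (hμ : μ = volume.withDensity (fun x => ENNReal.ofReal (∏ j, f j (x j))))
    (G : (Fin d → ℝ) → ℝ) (hG : Measurable G)
    (α : ℝ) (hα : 0 < α) (hα1 : α < 1)
    (Fδ : ℝ → ℝ)
    (hFδ : ∀ t, Fδ t = ((volume.withDensity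
        (fun x => ENNReal.ofReal (fδ (x i) * ∏ j ∈ Finset.univ.erase i, f j (x j))))
        {x | G x ≤ t}).toReal)
    (qδα : ℝ) (hqδα : qδα = sInf {t : ℝ | α ≤ Fδ t})
    -- `q_{iδ}^α` is the unique solution of the crossing inequalities
    (hbelow : ∀ s, s < qδα → Fδ s < α) (habove : ∀ s, qδα < s → α < Fδ s)
    -- the i.i.d. sample
    (Ω : Type*) [MeasurableSpace Ω] (ℙ : Measure Ω) [IsProbabilityMeasure ℙ]
    (X : ℕ → Ω → (Fin d → ℝ)) (hX_meas : ∀ n, Measurable (X n))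
    (hX_law : ∀ n, Measure.map (X n) ℙ = μ)
    (hX_indep : ProbabilityTheory.iIndepFun X ℙ) :
    ∀ᵐ ω ∂ℙ, Tendsto (fun N : ℕ =>
        sInf {t : ℝ | α ≤
          (∑ n ∈ Finset.range N,
            (fδ (X n ω i) / f i (X n ω i)) * (if G (X n ω) ≤ t then (1 : ℝ) else 0)) /
          (∑ n ∈ Finset.range N, fδ (X n ω i) / f i (X n ω i))})
      atTop (nhds qδα) :=
  self_normalized_IS_quantile_strongly_consistent_general d i f fδ hf_meas hfδ_meas hf_nonneg
    hfδ_nonneg hf_int hfδ_int habs μ hμ G hG α Fδ hFδ qδα hbelow habove Ω ℙ X hX_meas hX_law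
    hX_indep
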